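/- Let n ≥ 2, let x_1 ≤ ⋯ ≤ x_n be real numbers with Σ_{i=1}^{n} x_i = 0, and set σ_μ² := (1/n) Σ_{i=1}^{n} x_i². Let z_1 ≤ ⋯ ≤ z_{n−1} be real numbers with Φ(z_i) = i/n for i = 1, …, n−1, and set l := Σ_{i=1}^{n−1} (x_{i+1} − x_i) φ(z_i). Then for every real σ: ∫_{−∞}^{z_1} (x_1 − σ z)² φ(z) dz + Σ_{i=2}^{n−1} ∫_{z_{i−1}}^{z_i} (x_i − σ z)² φ(z) dz + ∫_{z_{n−1}}^{∞} (x_n − σ z)² φ(z) dz = σ_μ² − 2 σ l + σ². -/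

import Mathlib

open MeasureTheory

/-- The standard normal density `φ(z) = (2π)^{-1/2} exp(-z²/2)`. -/
noncomputable def stdGaussianPDF (z : ℝ) : ℝ :=
  (Real.sqrt (2 * Real.pi))⁻¹ * Real.exp (-z ^ 2 / 2)

/-- The standard normal cumulative distribution function `Φ(t) = ∫_{-∞}^t φ(z) dz`. -/
noncomputable def stdGaussianCDF (t : ℝ) : ℝ :=
  ∫ z in Set.Iic t, stdGaussianPDF z

/-!
Since `φ' = -t φ`, the integrand splits as
`(X - σ t)² φ(t) = (X² + σ²) φ(t) + d/dt [σ (2X - σ t) φ(t)]`.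
Hence the cell `[z_{i-1}, z_i]`, of Gaussian mass `1/n`, contributes `(x_i² + σ²)/n` plus
boundary terms, which vanish at `±∞` because they and their derivatives are integrable. At an
interior quantile `z_i` the boundary terms of the two adjacent cells differ only through `x_i`
versus `x_{i+1}`, leaving `2σ (x_i - x_{i+1}) φ(z_i)`; summing these gives `-2σ l`.
-/

open Real Set

lemma stdGaussianPDF_eq_gaussianPDFReal :
    stdGaussianPDF = ProbabilityTheory.gaussianPDFReal 0 1 := by
  ext t
  simp [stdGaussianPDF, ProbabilityTheory.gaussianPDFReal]

lemma integral_stdGaussianPDF : ∫ t, stdGaussianPDF t = 1 := by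
  rw [stdGaussianPDF_eq_gaussianPDFReal]
  exact ProbabilityTheory.integral_gaussianPDFReal_eq_one 0 one_ne_zero

lemma hasDerivAt_stdGaussianPDF (t : ℝ) :
    HasDerivAt stdGaussianPDF (-t * stdGaussianPDF t) t := by
  have h : HasDerivAt (fun s : ℝ => -s ^ 2 / 2) (-(2 * t) / 2) t := by
    simpa using ((hasDerivAt_id t).pow 2).neg.div_const 2
  exact (h.exp.const_mul (√(2 * π))⁻¹).congr_deriv (by unfold stdGaussianPDF; ring)

lemma integrable_pow_mul_stdGaussianPDF (k : ℕ) :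
    Integrable fun t => t ^ k * stdGaussianPDF t := by
  have h := (integrable_rpow_mul_exp_neg_mul_sq one_half_pos
    (neg_one_lt_zero.trans_le k.cast_nonneg)).const_mul (√(2 * π))⁻¹
  refine h.congr (ae_of_all _ fun t => ?_)
  simp only [stdGaussianPDF, rpow_natCast]
  ring_nf

lemma integrable_stdGaussianPDF : Integrable stdGaussianPDF := by
  simpa using integrable_pow_mul_stdGaussianPDF 0

lemma integrable_sq_mul_stdGaussianPDF (X σ : ℝ) :
    Integrable fun t => (X - σ * t) ^ 2 * stdGaussianPDF t := by
  have h := ((integrable_pow_mul_stdGaussianPDF 0).const_mul (X ^ 2)).sub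
    (((integrable_pow_mul_stdGaussianPDF 1).const_mul (2 * σ * X)).sub
      ((integrable_pow_mul_stdGaussianPDF 2).const_mul (σ ^ 2)))
  refine h.congr (ae_of_all _ fun t => ?_)
  simp only [Pi.sub_apply]
  ring

noncomputable def sqCostCorrection (X σ t : ℝ) : ℝ :=
  σ * (2 * X - σ * t) * stdGaussianPDF t

lemma sqCostCorrection_sub (X Y σ t : ℝ) :
    sqCostCorrection X σ t - sqCostCorrection Y σ t = 2 * σ * (X - Y) * stdGaussianPDF t := by
  unfold sqCostCorrection
  ring

lemma hasDerivAt_sqCostCorrection (X σ t : ℝ) :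
    HasDerivAt (sqCostCorrection X σ)
      ((X - σ * t) ^ 2 * stdGaussianPDF t - (X ^ 2 + σ ^ 2) * stdGaussianPDF t) t := by
  have h : HasDerivAt (fun s => σ * (2 * X - σ * s)) (σ * -(σ * 1)) t :=
    (((hasDerivAt_id t).const_mul σ).const_sub (2 * X)).const_mul σ
  exact (h.mul (hasDerivAt_stdGaussianPDF t)).congr_deriv (by ring)

lemma integrable_sqCostCorrection (X σ : ℝ) : Integrable (sqCostCorrection X σ) := by
  have h := ((integrable_pow_mul_stdGaussianPDF 0).const_mul (2 * σ * X)).sub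
    ((integrable_pow_mul_stdGaussianPDF 1).const_mul (σ ^ 2))
  refine h.congr (ae_of_all _ fun t => ?_)
  simp only [Pi.sub_apply, sqCostCorrection]
  ring

lemma integrable_deriv_sqCostCorrection (X σ : ℝ) :
    Integrable fun t => (X - σ * t) ^ 2 * stdGaussianPDF t - (X ^ 2 + σ ^ 2) * stdGaussianPDF t :=
  (integrable_sq_mul_stdGaussianPDF X σ).sub (integrable_stdGaussianPDF.const_mul _)

lemma integral_Iic_sq_mul_stdGaussianPDF (X σ c : ℝ) :
    ∫ t in Iic c, (X - σ * t) ^ 2 * stdGaussianPDF t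
      = (X ^ 2 + σ ^ 2) * stdGaussianCDF c + sqCostCorrection X σ c := by
  have hderiv := fun t (_ : t ∈ Iic c) => hasDerivAt_sqCostCorrection X σ t
  have hint := (integrable_deriv_sqCostCorrection X σ).integrableOn (s := Iic c)
  have hlim := tendsto_zero_of_hasDerivAt_of_integrableOn_Iic hderiv hint
    (integrable_sqCostCorrection X σ).integrableOn
  have h := integral_Iic_of_hasDerivAt_of_tendsto' hderiv hint hlim
  rw [integral_sub (integrable_sq_mul_stdGaussianPDF X σ).integrableOn
    (integrable_stdGaussianPDF.const_mul _).integrableOn, integral_const_mul] at h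
  rw [stdGaussianCDF]
  linarith

lemma integral_sq_mul_stdGaussianPDF (X σ : ℝ) :
    ∫ t, (X - σ * t) ^ 2 * stdGaussianPDF t = X ^ 2 + σ ^ 2 := by
  have h := integral_eq_zero_of_hasDerivAt_of_integrable (hasDerivAt_sqCostCorrection X σ)
    (integrable_deriv_sqCostCorrection X σ) (integrable_sqCostCorrection X σ)
  rw [integral_sub (integrable_sq_mul_stdGaussianPDF X σ)
    (integrable_stdGaussianPDF.const_mul _), integral_const_mul, integral_stdGaussianPDF] at h
  linarith

lemma integral_Ici_sq_mul_stdGaussianPDF (X σ c : ℝ) :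
    ∫ t in Ici c, (X - σ * t) ^ 2 * stdGaussianPDF t
      = (X ^ 2 + σ ^ 2) * (1 - stdGaussianCDF c) - sqCostCorrection X σ c := by
  have h := intervalIntegral.integral_Iic_add_Ioi (b := c)
    (integrable_sq_mul_stdGaussianPDF X σ).integrableOn
    (integrable_sq_mul_stdGaussianPDF X σ).integrableOn
  rw [integral_Iic_sq_mul_stdGaussianPDF, integral_sq_mul_stdGaussianPDF] at h
  rw [integral_Ici_eq_integral_Ioi]
  linarith

lemma intervalIntegral_sq_mul_stdGaussianPDF (X σ a b : ℝ) :
    ∫ t in a..b, (X - σ * t) ^ 2 * stdGaussianPDF t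
      = (X ^ 2 + σ ^ 2) * (stdGaussianCDF b - stdGaussianCDF a)
        + (sqCostCorrection X σ b - sqCostCorrection X σ a) := by
  rw [← intervalIntegral.integral_Iic_sub_Iic
    (integrable_sq_mul_stdGaussianPDF X σ).integrableOn
    (integrable_sq_mul_stdGaussianPDF X σ).integrableOn,
    integral_Iic_sq_mul_stdGaussianPDF, integral_Iic_sq_mul_stdGaussianPDF]
  ring

namespace Finset

variable {M : Type*}

lemma sum_Icc_one_eq_add_sum_Icc_two [AddCommMonoid M] (f : ℕ → M) (k : ℕ) :
    ∑ i ∈ Icc 1 (k + 1), f i = f 1 + ∑ i ∈ Icc 2 (k + 1), f i := by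
  rw [Icc_eq_cons_Ioc (by omega), sum_cons, ← Icc_add_one_left_eq_Ioc]
  rfl

lemma sum_Icc_one_eq_add_sum_Icc_two_add [AddCommMonoid M] (f : ℕ → M) (m : ℕ) :
    ∑ i ∈ Icc 1 (m + 2), f i = f 1 + ∑ i ∈ Icc 2 (m + 1), f i + f (m + 2) := by
  rw [sum_Icc_succ_top (by omega), sum_Icc_one_eq_add_sum_Icc_two]

lemma add_sum_Icc_sub_sub_eq_sum_Icc [AddCommGroup M] (f g : ℕ → M) (m : ℕ) :
    f 1 + ∑ i ∈ Icc 2 (m + 1), (f i - g i) - g (m + 2)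
      = ∑ i ∈ Icc 1 (m + 1), (f i - g (i + 1)) := by
  induction m with
  | zero => simp
  | succ m ih =>
    rw [sum_Icc_succ_top (a := 2) (by omega), sum_Icc_succ_top (a := 1) (by omega), ← ih]
    abel

/-- Summation by parts over cells `1, …, m + 2` with boundary terms `f i - g i`, where the first
cell has no left and the last no right boundary term. -/
lemma sum_cells_eq [AddCommGroup M] (a f g : ℕ → M) (m : ℕ) :
    (a 1 + f 1) + ∑ i ∈ Icc 2 (m + 1), (a i + (f i - g i)) + (a (m + 2) - g (m + 2))
      = ∑ i ∈ Icc 1 (m + 2), a i + ∑ i ∈ Icc 1 (m + 1), (f i - g (i + 1)) := by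
  rw [sum_add_distrib, sum_Icc_one_eq_add_sum_Icc_two_add, ← add_sum_Icc_sub_sub_eq_sum_Icc]
  abel

end Finset

lemma sum_cell_sq_costs_eq (x z : ℕ → ℝ) (σ p : ℝ) (m : ℕ)
    (hfirst : stdGaussianCDF (z 1) = p)
    (hcell : ∀ i ∈ Finset.Icc 2 (m + 1), stdGaussianCDF (z i) - stdGaussianCDF (z (i - 1)) = p)
    (hlast : 1 - stdGaussianCDF (z (m + 1)) = p) :
    (∫ t in Iic (z 1), (x 1 - σ * t) ^ 2 * stdGaussianPDF t)
      + (∑ i ∈ Finset.Icc 2 (m + 1),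
          ∫ t in (z (i - 1))..(z i), (x i - σ * t) ^ 2 * stdGaussianPDF t)
      + (∫ t in Ici (z (m + 1)), (x (m + 2) - σ * t) ^ 2 * stdGaussianPDF t)
      = p * ∑ i ∈ Finset.Icc 1 (m + 2), (x i ^ 2 + σ ^ 2)
        - 2 * σ * ∑ i ∈ Finset.Icc 1 (m + 1), (x (i + 1) - x i) * stdGaussianPDF (z i) := by
  rw [integral_Iic_sq_mul_stdGaussianPDF, integral_Ici_sq_mul_stdGaussianPDF, hfirst, hlast,
    Finset.sum_congr rfl fun i hi => by rw [intervalIntegral_sq_mul_stdGaussianPDF, hcell i hi]]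
  refine (Finset.sum_cells_eq (fun i => (x i ^ 2 + σ ^ 2) * p)
    (fun i => sqCostCorrection (x i) σ (z i))
    (fun i => sqCostCorrection (x i) σ (z (i - 1))) m).trans ?_
  rw [← Finset.sum_mul, Finset.mul_sum (a := 2 * σ), sub_eq_add_neg, ← Finset.sum_neg_distrib]
  congr 1
  · ring
  · refine Finset.sum_congr rfl fun i _ => ?_
    rw [Nat.add_sub_cancel, sqCostCorrection_sub]
    ring

theorem squared_transport_cost_to_gaussian_general
    (n : ℕ) (hn : 2 ≤ n) (x : ℕ → ℝ)
    (σμsq : ℝ) (hσμsq : σμsq = (1 / (n : ℝ)) * ∑ i ∈ Finset.Icc 1 n, (x i) ^ 2)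
    (z : ℕ → ℝ)
    (hz : ∀ i, 1 ≤ i → i ≤ n - 1 → stdGaussianCDF (z i) = (i : ℝ) / n)
    (l : ℝ) (hl : l = ∑ i ∈ Finset.Icc 1 (n - 1), (x (i + 1) - x i) * stdGaussianPDF (z i))
    (σ : ℝ) :
    (∫ t in Set.Iic (z 1), (x 1 - σ * t) ^ 2 * stdGaussianPDF t)
      + (∑ i ∈ Finset.Icc 2 (n - 1),
          ∫ t in (z (i - 1))..(z i), (x i - σ * t) ^ 2 * stdGaussianPDF t)
      + (∫ t in Set.Ici (z (n - 1)), (x n - σ * t) ^ 2 * stdGaussianPDF t)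
      = σμsq - 2 * σ * l + σ ^ 2 := by
  obtain ⟨m, rfl⟩ : ∃ m, n = m + 2 := ⟨n - 2, by omega⟩
  rw [show m + 2 - 1 = m + 1 from rfl] at hz hl ⊢
  set N : ℝ := ((m + 2 : ℕ) : ℝ) with hN
  have hN0 : N ≠ 0 := by positivity
  have hfirst : stdGaussianCDF (z 1) = 1 / N := by simpa using hz 1 le_rfl (by omega)
  have hcell : ∀ i ∈ Finset.Icc 2 (m + 1),
      stdGaussianCDF (z i) - stdGaussianCDF (z (i - 1)) = 1 / N := by
    intro i hi
    rw [Finset.mem_Icc] at hi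
    rw [hz i (by omega) hi.2, hz (i - 1) (by omega) (by omega), Nat.cast_sub (by omega)]
    ring
  have hlast : 1 - stdGaussianCDF (z (m + 1)) = 1 / N := by
    rw [hz (m + 1) (by omega) le_rfl, hN]
    field_simp
    push_cast
    ring
  rw [sum_cell_sq_costs_eq x z σ (1 / N) m hfirst hcell hlast, hσμsq, hl,
    Finset.sum_add_distrib, Finset.sum_const, Nat.card_Icc, show m + 2 + 1 - 1 = m + 2 from rfl,
    nsmul_eq_mul, ← hN]
  field_simp
  ring

/-- For sorted reals `x 1 ≤ ⋯ ≤ x n` with zero sum,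
`σ_μ² = (1/n) Σ (x i)²`, Gaussian quantiles `z 1 ≤ ⋯ ≤ z (n-1)` with `Φ (z i) = i/n`,
and projection length `l = Σ_{i=1}^{n-1} (x (i+1) - x i) φ(z i)`, the quadratic
transport cost to the centered Gaussian of standard deviation `σ` equals
`σ_μ² - 2 σ l + σ²` for every real `σ`. -/
theorem squared_transport_cost_to_gaussian
    (n : ℕ) (hn : 2 ≤ n) (x : ℕ → ℝ)
    (hxmono : ∀ i, 1 ≤ i → i < n → x i ≤ x (i + 1))
    (hxsum : ∑ i ∈ Finset.Icc 1 n, x i = 0)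
    (σμsq : ℝ) (hσμsq : σμsq = (1 / (n : ℝ)) * ∑ i ∈ Finset.Icc 1 n, (x i) ^ 2)
    (z : ℕ → ℝ)
    (hzmono : ∀ i, 1 ≤ i → i + 1 ≤ n - 1 → z i ≤ z (i + 1))
    (hz : ∀ i, 1 ≤ i → i ≤ n - 1 → stdGaussianCDF (z i) = (i : ℝ) / n)
    (l : ℝ) (hl : l = ∑ i ∈ Finset.Icc 1 (n - 1), (x (i + 1) - x i) * stdGaussianPDF (z i))
    (σ : ℝ) :
    (∫ t in Set.Iic (z 1), (x 1 - σ * t) ^ 2 * stdGaussianPDF t)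
      + (∑ i ∈ Finset.Icc 2 (n - 1),
          ∫ t in (z (i - 1))..(z i), (x i - σ * t) ^ 2 * stdGaussianPDF t)
      + (∫ t in Set.Ici (z (n - 1)), (x n - σ * t) ^ 2 * stdGaussianPDF t)
      = σμsq - 2 * σ * l + σ ^ 2 :=
  squared_transport_cost_to_gaussian_general n hn x σμsq hσμsq z hz l hl σ
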